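/- Let χ(X) = X^n + C_1 X^{n-1} + ... + C_n be monic, λ ∈ ℂ, and let r(λ) = (1, λ, ..., λ^{n-1}) and c(λ) be the Horner eigenvector with entries c(λ)_m = C_{n-m} + C_{n-m-1}λ + ... + λ^{n-m}. Then for all integers a, b ≥ 0, (1/(a!·b!))·r^{(a)}(λ)·c^{(b)}(λ) = (1/(a+b+1)!)·χ^{(a+b+1)}(λ), where the superscripts denote derivatives with respect to λ (resp. X). -/
import Mathlib


open Polynomial

/-- The Horner eigenvector of the companion matrix of `χ`, as a polynomial in the
eigenvalue variable: its `m`-th entry is `∑_{j < n-m} χ.coeff (m+1+j) * X^j`. -/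
noncomputable def hornerPoly (n : ℕ) (χ : Polynomial ℂ) (m : Fin n) : Polynomial ℂ :=
  ∑ j ∈ Finset.range (n - (m : ℕ)), C (χ.coeff ((m : ℕ) + 1 + j)) * X ^ j

/-- Hockey-stick identity on `range`. -/
lemma hockey (s a : ℕ) :
    ∑ m ∈ Finset.range (s + 1), Nat.choose m a = Nat.choose (s + 1) (a + 1) := by
  rw [← Nat.sum_Icc_choose s a]
  refine (Finset.sum_subset ?_ ?_).symm
  · intro m hm
    simp only [Finset.mem_Icc] at hm
    simp only [Finset.mem_range]; omega
  · intro m hm hnm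
    simp only [Finset.mem_range] at hm
    simp only [Finset.mem_Icc, not_and, not_le] at hnm
    exact Nat.choose_eq_zero_of_lt (by omega)

/-- Convolution of binomial coefficients over varying tops. -/
lemma choose_conv (s a b : ℕ) :
    ∑ m ∈ Finset.range (s + 1), Nat.choose m a * Nat.choose (s - m) b
      = Nat.choose (s + 1) (a + b + 1) := by
  induction s generalizing b with
  | zero =>
    simp only [Finset.range_one, Finset.sum_singleton, Nat.zero_sub]
    rcases a with _ | a
    · rcases b with _ | b
      · simp
      · simp [Nat.choose_eq_zero_of_lt, Nat.choose]
    · simp [Nat.choose_eq_zero_of_lt, Nat.choose_eq_zero_of_lt (by omega : 1 < a + 1 + b + 1)]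
  | succ s ih =>
    rcases b with _ | c
    · simp only [Nat.choose_zero_right, mul_one]
      rw [hockey]
    · rw [Finset.sum_range_succ]
      have h0 : Nat.choose (s + 1 - (s + 1)) (c + 1) = 0 := by
        simp [Nat.choose_eq_zero_of_lt]
      rw [h0, mul_zero, add_zero]
      have hsum : ∀ m ∈ Finset.range (s + 1),
          Nat.choose m a * Nat.choose (s + 1 - m) (c + 1)
            = Nat.choose m a * Nat.choose (s - m) c
              + Nat.choose m a * Nat.choose (s - m) (c + 1) := by
        intro m hm
        simp only [Finset.mem_range] at hm
        have h1 : s + 1 - m = (s - m) + 1 := by omega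
        rw [h1, Nat.choose_succ_succ, Nat.mul_add]
      rw [Finset.sum_congr rfl hsum, Finset.sum_add_distrib, ih c, ih (c + 1)]
      have h2 : a + (c + 1) + 1 = (a + c + 1) + 1 := by omega
      rw [h2, Nat.choose_succ_succ (s + 1) (a + c + 1)]

/-- Key complex identity: the convolution with matched powers of `μ`. -/
lemma key_sum (μ : ℂ) (s a b : ℕ) :
    ∑ m ∈ Finset.range (s + 1),
        (Nat.choose m a : ℂ) * (Nat.choose (s - m) b : ℂ) * μ ^ ((m - a) + ((s - m) - b))
      = (Nat.choose (s + 1) (a + b + 1) : ℂ) * μ ^ (s - (a + b)) := by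
  have hterm : ∀ m ∈ Finset.range (s + 1),
      (Nat.choose m a : ℂ) * (Nat.choose (s - m) b : ℂ) * μ ^ ((m - a) + ((s - m) - b))
        = (Nat.choose m a : ℂ) * (Nat.choose (s - m) b : ℂ) * μ ^ (s - (a + b)) := by
    intro m hm
    simp only [Finset.mem_range] at hm
    by_cases h : a ≤ m ∧ b ≤ s - m
    · obtain ⟨h1, h2⟩ := h
      have he : (m - a) + ((s - m) - b) = s - (a + b) := by omega
      rw [he]
    · push_neg at h
      rcases le_or_gt a m with h1 | h1
      · rw [Nat.choose_eq_zero_of_lt (h h1)]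
        simp
      · rw [Nat.choose_eq_zero_of_lt h1]
        simp
  rw [Finset.sum_congr rfl hterm, ← Finset.sum_mul]
  congr 1
  exact_mod_cast choose_conv s a b

/-- Evaluation of an iterated derivative of a monomial. -/
lemma eval_iter_deriv_monomial (c μ : ℂ) (i t : ℕ) :
    (derivative^[t] (C c * X ^ i : Polynomial ℂ)).eval μ
      = c * (Nat.descFactorial i t : ℂ) * μ ^ (i - t) := by
  rw [iterate_derivative_C_mul, iterate_derivative_X_pow_eq_C_mul]
  simp [mul_assoc]

/-- Triangular reindexing of a double sum. -/
lemma tri_reindex (n : ℕ) (f : ℕ → ℕ → ℂ) :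
    ∑ m ∈ Finset.range n, ∑ j ∈ Finset.range (n - m), f m j
      = ∑ s ∈ Finset.range n, ∑ m ∈ Finset.range (s + 1), f m (s - m) := by
  rw [Finset.sum_sigma', Finset.sum_sigma']
  refine Finset.sum_nbij' (fun p => ⟨p.1 + p.2, p.1⟩) (fun p => ⟨p.2, p.1 - p.2⟩) ?_ ?_ ?_ ?_ ?_
  · rintro ⟨m, j⟩ h
    simp only [Finset.mem_sigma, Finset.mem_range] at h ⊢
    omega
  · rintro ⟨s, m⟩ h
    simp only [Finset.mem_sigma, Finset.mem_range] at h ⊢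
    omega
  · rintro ⟨m, j⟩ h
    simp
  · rintro ⟨s, m⟩ h
    simp only [Finset.mem_sigma, Finset.mem_range] at h
    have : m + (s - m) = s := by omega
    simp [this]
  · rintro ⟨m, j⟩ h
    simp only [Finset.mem_sigma, Finset.mem_range] at h
    simp only [Nat.add_sub_cancel_left]

/-- For a monic polynomial `χ` of degree `n`, with `r(μ) = (1, μ, ..., μ^{n-1})` and `c(μ)`
the Horner eigenvector, one has
`(1/(a!·b!))·r^{(a)}(μ)·c^{(b)}(μ) = (1/(a+b+1)!)·χ^{(a+b+1)}(μ)` for all `a, b ≥ 0`. -/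
theorem horner_dot_vandermonde (n : ℕ) (hn : 0 < n) (χ : Polynomial ℂ)
    (hmon : χ.Monic) (hdeg : χ.natDegree = n) (μ : ℂ) (a b : ℕ) :
    (1 / ((Nat.factorial a : ℂ) * (Nat.factorial b : ℂ))) *
        ∑ m : Fin n,
          (derivative^[a] (X ^ (m : ℕ) : Polynomial ℂ)).eval μ *
            (derivative^[b] (hornerPoly n χ m)).eval μ
      = (1 / (Nat.factorial (a + b + 1) : ℂ)) * (derivative^[a + b + 1] χ).eval μ := by
  -- rewrite the left inner sum
  have hr : ∀ m : Fin n, (derivative^[a] (X ^ (m : ℕ) : Polynomial ℂ)).eval μ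
      = (Nat.descFactorial (m : ℕ) a : ℂ) * μ ^ ((m : ℕ) - a) := by
    intro m
    have := eval_iter_deriv_monomial 1 μ (m : ℕ) a
    simpa using this
  have hc : ∀ m : Fin n, (derivative^[b] (hornerPoly n χ m)).eval μ
      = ∑ j ∈ Finset.range (n - (m : ℕ)),
          χ.coeff ((m : ℕ) + 1 + j) * (Nat.descFactorial j b : ℂ) * μ ^ (j - b) := by
    intro m
    rw [hornerPoly, iterate_derivative_sum, eval_finset_sum]
    exact Finset.sum_congr rfl fun j _ => eval_iter_deriv_monomial _ μ j b
  simp only [hr, hc]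
  -- rewrite the right side
  have hχ : (derivative^[a + b + 1] χ).eval μ
      = ∑ i ∈ Finset.range (n + 1),
          χ.coeff i * (Nat.descFactorial i (a + b + 1) : ℂ) * μ ^ (i - (a + b + 1)) := by
    conv_lhs => rw [χ.as_sum_range' (n + 1) (by omega)]
    rw [iterate_derivative_sum, eval_finset_sum]
    refine Finset.sum_congr rfl fun i _ => ?_
    rw [← C_mul_X_pow_eq_monomial]
    exact eval_iter_deriv_monomial _ μ i (a + b + 1)
  rw [hχ, Finset.sum_range_succ']
  have hd0 : Nat.descFactorial 0 (a + b + 1) = 0 :=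
    Nat.descFactorial_eq_zero_iff_lt.2 (by omega)
  rw [hd0]
  push_cast
  rw [mul_zero, zero_mul, add_zero]
  -- turn the Fin sum into a range sum
  rw [Fin.sum_univ_eq_sum_range (fun m =>
    (Nat.descFactorial m a : ℂ) * μ ^ (m - a) *
      ∑ j ∈ Finset.range (n - m),
        χ.coeff (m + 1 + j) * (Nat.descFactorial j b : ℂ) * μ ^ (j - b))]
  rw [Finset.mul_sum, Finset.mul_sum]
  have hpush : ∀ m ∈ Finset.range n,
      (1 : ℂ) / ((Nat.factorial a : ℂ) * (Nat.factorial b : ℂ)) *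
        ((Nat.descFactorial m a : ℂ) * μ ^ (m - a) *
          ∑ j ∈ Finset.range (n - m),
            χ.coeff (m + 1 + j) * (Nat.descFactorial j b : ℂ) * μ ^ (j - b))
        = ∑ j ∈ Finset.range (n - m),
            (1 : ℂ) / ((Nat.factorial a : ℂ) * (Nat.factorial b : ℂ)) *
              ((Nat.descFactorial m a : ℂ) * μ ^ (m - a) *
                (χ.coeff (m + 1 + j) * (Nat.descFactorial j b : ℂ) * μ ^ (j - b))) := by
    intro m _
    rw [Finset.mul_sum, Finset.mul_sum]
  rw [Finset.sum_congr rfl hpush]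
  rw [tri_reindex n (fun m j =>
    (1 : ℂ) / ((Nat.factorial a : ℂ) * (Nat.factorial b : ℂ)) *
      ((Nat.descFactorial m a : ℂ) * μ ^ (m - a) *
        (χ.coeff (m + 1 + j) * (Nat.descFactorial j b : ℂ) * μ ^ (j - b))))]
  refine Finset.sum_congr rfl fun s hs => ?_
  simp only [Finset.mem_range] at hs
  -- per-`s` identity
  have hfa : (Nat.factorial a : ℂ) ≠ 0 := Nat.cast_ne_zero.2 (Nat.factorial_ne_zero a)
  have hfb : (Nat.factorial b : ℂ) ≠ 0 := Nat.cast_ne_zero.2 (Nat.factorial_ne_zero b)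
  have hfab : (Nat.factorial (a + b + 1) : ℂ) ≠ 0 :=
    Nat.cast_ne_zero.2 (Nat.factorial_ne_zero _)
  have hL : ∀ m ∈ Finset.range (s + 1),
      (1 : ℂ) / ((Nat.factorial a : ℂ) * (Nat.factorial b : ℂ)) *
        ((Nat.descFactorial m a : ℂ) * μ ^ (m - a) *
          (χ.coeff (m + 1 + (s - m)) * (Nat.descFactorial (s - m) b : ℂ) * μ ^ ((s - m) - b)))
        = χ.coeff (s + 1) *
            ((Nat.choose m a : ℂ) * (Nat.choose (s - m) b : ℂ) *
              μ ^ ((m - a) + ((s - m) - b))) := by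
    intro m hm
    simp only [Finset.mem_range] at hm
    have hco : m + 1 + (s - m) = s + 1 := by omega
    rw [hco, Nat.descFactorial_eq_factorial_mul_choose,
      Nat.descFactorial_eq_factorial_mul_choose]
    push_cast
    rw [pow_add]
    field_simp
  rw [Finset.sum_congr rfl hL, ← Finset.mul_sum, key_sum μ s a b]
  rw [Nat.descFactorial_eq_factorial_mul_choose]
  push_cast
  field_simp
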